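/- Let P be a join-semilattice with a least element 0, i.e., a commutative idempotent monoid (P, ∨, 0). Define δ: P × P → P by δ_m(s) := 0 if m ≤ s, and δ_m(s) := m ∨ s otherwise. Then δ is a 1-cocycle: δ_0(s) = 0 and δ_{m∨n}(s) = δ_n(s) ∨ δ_m(n ∨ s) for all m, n, s ∈ P. -/
import Mathlib


open Classical in
/-- In a join-semilattice with bottom, `δ m s := 0` if `m ≤ s`, else `m ⊔ s`, is a 1-cocycle. -/
theorem bellmanFord_delta_is_cocycle {P : Type*} [SemilatticeSup P] [OrderBot P]
    (δ : P → P → P) (hδ : ∀ m s : P, δ m s = if m ≤ s then ⊥ else m ⊔ s) :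
    (∀ s : P, δ ⊥ s = ⊥) ∧
      (∀ m n s : P, δ (m ⊔ n) s = δ n s ⊔ δ m (n ⊔ s)) := by
  constructor
  · intro s; simp [hδ]
  · intro m n s
    simp only [hδ, sup_le_iff]
    split_ifs with h1 h2 h3 h2 h3 <;>
      simp_all [sup_assoc, sup_eq_right.mpr, le_sup_right]
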